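/- Let (a_H, b_H) ∈ ℂ^H × ℂ^H and (a_L, b_L) ∈ ℂ^L × ℂ^L be complementary pairs, i.e., R_{a_H}(τ) + R_{b_H}(τ) = 0 and R_{a_L}(τ) + R_{b_L}(τ) = 0 for every lag τ ≠ 0, and assume ‖a_H‖² = ‖b_H‖² = H and ‖a_L‖² = ‖b_L‖² = L. Let N_r ≥ 0 and P_h, P_l > 0, and define the four composite pulses s₁ = [√P_h·a_H ; 0_{N_r} ; √P_l·a_L], s₂ = [√P_h·b_H ; 0_{N_r} ; √P_l·b_L], s₃ = [√P_h·a_H ; 0_{N_r} ; −√P_l·a_L], s₄ = [√P_h·b_H ; 0_{N_r} ; −√P_l·b_L]. Then Σ_{i=1}^{4} R_{s_i}(τ) = 0 for every lag τ ≠ 0, and Σ_{i=1}^{4} R_{s_i}(0) = 4·(P_h·H + P_l·L). -/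
import Mathlib


open scoped ComplexConjugate

/-- Aperiodic autocorrelation of a (finitely supported) complex sequence on `ℤ`. -/
noncomputable def acorr (x : ℤ → ℂ) (τ : ℤ) : ℂ :=
  ∑' n : ℤ, x n * conj (x (n - τ))


lemma sum_supp {x : ℤ → ℂ} (z : ℤ → ℂ) {lo hi : ℤ} (hx : ∀ n, n < lo ∨ hi ≤ n → x n = 0) :
    Summable (fun n => x n * z n) := by
  apply summable_of_ne_finset_zero (s := Finset.Ico lo hi)
  intro n hn
  simp only [Finset.mem_Ico, not_and_or, not_le, not_lt] at hn
  rw [hx n (by omega), zero_mul]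

lemma acorr_shift (x : ℤ → ℂ) (c τ : ℤ) : acorr (fun n => x (n - c)) τ = acorr x τ := by
  unfold acorr
  have h1 : ∀ n : ℤ, (fun k => x (k - c)) n * conj ((fun k => x (k - c)) (n - τ)) =
      (fun m => x m * conj (x (m - τ))) ((Equiv.subRight c) n) := by
    intro n
    have h2 : n - τ - c = n - c - τ := by ring
    simp [Equiv.subRight, h2]
  rw [tsum_congr h1]
  exact (Equiv.subRight c).tsum_eq (fun m => x m * conj (x (m - τ)))

lemma pair_lemma (α β : ℂ) (hα : conj α = α) (hβ : conj β = β) (x y : ℤ → ℂ)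
    {lox hix loy hiy : ℤ}
    (hx : ∀ n, n < lox ∨ hix ≤ n → x n = 0) (hy : ∀ n, n < loy ∨ hiy ≤ n → y n = 0)
    (τ : ℤ) :
    acorr (fun n => α * x n + β * y n) τ + acorr (fun n => α * x n - β * y n) τ
      = 2 * α * α * acorr x τ + 2 * β * β * acorr y τ := by
  unfold acorr
  set lo := min lox loy
  set hi := max hix hiy
  have hboth : ∀ n : ℤ, n < lo ∨ hi ≤ n → x n = 0 ∧ y n = 0 := by
    intro n hn
    exact ⟨hx n (by omega), hy n (by omega)⟩
  have hf : Summable (fun n => (α * x n + β * y n) * conj (α * x (n - τ) + β * y (n - τ))) := by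
    apply summable_of_ne_finset_zero (s := Finset.Ico lo hi)
    intro n hn
    simp only [Finset.mem_Ico, not_and_or, not_le, not_lt] at hn
    obtain ⟨h1, h2⟩ := hboth n (by omega)
    rw [h1, h2]; ring
  have hg : Summable (fun n => (α * x n - β * y n) * conj (α * x (n - τ) - β * y (n - τ))) := by
    apply summable_of_ne_finset_zero (s := Finset.Ico lo hi)
    intro n hn
    simp only [Finset.mem_Ico, not_and_or, not_le, not_lt] at hn
    obtain ⟨h1, h2⟩ := hboth n (by omega)
    rw [h1, h2]; ring
  rw [← Summable.tsum_add hf hg]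
  have hpt : ∀ n : ℤ,
      (α * x n + β * y n) * conj (α * x (n - τ) + β * y (n - τ)) +
        (α * x n - β * y n) * conj (α * x (n - τ) - β * y (n - τ))
      = 2 * α * α * (x n * conj (x (n - τ))) + 2 * β * β * (y n * conj (y (n - τ))) := by
    intro n
    simp only [map_add, map_sub, map_mul, hα, hβ]
    ring
  rw [tsum_congr hpt,
    Summable.tsum_add ((sum_supp _ hx).mul_left _) ((sum_supp _ hy).mul_left _),
    tsum_mul_left, tsum_mul_left]
/-- The paper's main sequence-design claim (Section III-B): the four dual-power
pulses built from complementary pairs `(a_H, b_H)` and `(a_L, b_L)` together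
with the inverse-phase companions achieve perfect joint autocorrelation:
`Σᵢ R_{sᵢ}(τ) = 0` for `τ ≠ 0` and `Σᵢ R_{sᵢ}(0) = 4·(P_h·H + P_l·L)`. -/
theorem stmt10 (H L Nr : ℕ) (Ph Pl : ℝ) (hPh : 0 < Ph) (hPl : 0 < Pl)
    (aH bH aL bL : ℤ → ℂ)
    (haH : ∀ n : ℤ, n < 0 ∨ (H : ℤ) ≤ n → aH n = 0)
    (hbH : ∀ n : ℤ, n < 0 ∨ (H : ℤ) ≤ n → bH n = 0)
    (haL : ∀ n : ℤ, n < 0 ∨ (L : ℤ) ≤ n → aL n = 0)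
    (hbL : ∀ n : ℤ, n < 0 ∨ (L : ℤ) ≤ n → bL n = 0)
    (hcompH : ∀ τ : ℤ, τ ≠ 0 → acorr aH τ + acorr bH τ = 0)
    (hcompL : ∀ τ : ℤ, τ ≠ 0 → acorr aL τ + acorr bL τ = 0)
    (hnormaH : acorr aH 0 = (H : ℂ)) (hnormbH : acorr bH 0 = (H : ℂ))
    (hnormaL : acorr aL 0 = (L : ℂ)) (hnormbL : acorr bL 0 = (L : ℂ))
    (s₁ s₂ s₃ s₄ : ℤ → ℂ)
    (hs₁ : ∀ n : ℤ, s₁ n =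
      (Real.sqrt Ph : ℂ) * aH n + (Real.sqrt Pl : ℂ) * aL (n - ((H : ℤ) + (Nr : ℤ))))
    (hs₂ : ∀ n : ℤ, s₂ n =
      (Real.sqrt Ph : ℂ) * bH n + (Real.sqrt Pl : ℂ) * bL (n - ((H : ℤ) + (Nr : ℤ))))
    (hs₃ : ∀ n : ℤ, s₃ n =
      (Real.sqrt Ph : ℂ) * aH n - (Real.sqrt Pl : ℂ) * aL (n - ((H : ℤ) + (Nr : ℤ))))
    (hs₄ : ∀ n : ℤ, s₄ n =
      (Real.sqrt Ph : ℂ) * bH n - (Real.sqrt Pl : ℂ) * bL (n - ((H : ℤ) + (Nr : ℤ)))) :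
    (∀ τ : ℤ, τ ≠ 0 → acorr s₁ τ + acorr s₂ τ + acorr s₃ τ + acorr s₄ τ = 0) ∧
    acorr s₁ 0 + acorr s₂ 0 + acorr s₃ 0 + acorr s₄ 0
      = 4 * ((Ph : ℂ) * (H : ℂ) + (Pl : ℂ) * (L : ℂ)) := by

  set α : ℂ := (Real.sqrt Ph : ℂ) with hαdef
  set β : ℂ := (Real.sqrt Pl : ℂ) with hβdef
  set c : ℤ := (H : ℤ) + (Nr : ℤ) with hcdef
  have hα : conj α = α := Complex.conj_ofReal _
  have hβ : conj β = β := Complex.conj_ofReal _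
  have hαα : α * α = (Ph : ℂ) := by
    rw [hαdef, ← Complex.ofReal_mul, Real.mul_self_sqrt hPh.le]
  have hββ : β * β = (Pl : ℂ) := by
    rw [hβdef, ← Complex.ofReal_mul, Real.mul_self_sqrt hPl.le]
  have haL' : ∀ n : ℤ, n < c ∨ c + (L : ℤ) ≤ n → aL (n - c) = 0 := by
    intro n hn; exact haL _ (by omega)
  have hbL' : ∀ n : ℤ, n < c ∨ c + (L : ℤ) ≤ n → bL (n - c) = 0 := by
    intro n hn; exact hbL _ (by omega)
  have hseq₁ : s₁ = fun n => α * aH n + β * (fun m => aL (m - c)) n := funext hs₁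
  have hseq₃ : s₃ = fun n => α * aH n - β * (fun m => aL (m - c)) n := funext hs₃
  have hseq₂ : s₂ = fun n => α * bH n + β * (fun m => bL (m - c)) n := funext hs₂
  have hseq₄ : s₄ = fun n => α * bH n - β * (fun m => bL (m - c)) n := funext hs₄
  have key : ∀ τ : ℤ, acorr s₁ τ + acorr s₂ τ + acorr s₃ τ + acorr s₄ τ
      = 2 * (Ph : ℂ) * (acorr aH τ + acorr bH τ) + 2 * (Pl : ℂ) * (acorr aL τ + acorr bL τ) := by
    intro τ
    have h13 : acorr s₁ τ + acorr s₃ τ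
        = 2 * α * α * acorr aH τ + 2 * β * β * acorr aL τ := by
      rw [hseq₁, hseq₃, pair_lemma α β hα hβ aH (fun m => aL (m - c)) haH haL' τ,
        acorr_shift aL c τ]
    have h24 : acorr s₂ τ + acorr s₄ τ
        = 2 * α * α * acorr bH τ + 2 * β * β * acorr bL τ := by
      rw [hseq₂, hseq₄, pair_lemma α β hα hβ bH (fun m => bL (m - c)) hbH hbL' τ,
        acorr_shift bL c τ]
    have : acorr s₁ τ + acorr s₂ τ + acorr s₃ τ + acorr s₄ τ
        = (acorr s₁ τ + acorr s₃ τ) + (acorr s₂ τ + acorr s₄ τ) := by ring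
    rw [this, h13, h24]
    rw [show (2 : ℂ) * α * α = 2 * (α * α) by ring, show (2 : ℂ) * β * β = 2 * (β * β) by ring,
      hαα, hββ]
    ring
  constructor
  · intro τ hτ
    rw [key τ, hcompH τ hτ, hcompL τ hτ]
    ring
  · rw [key 0, hnormaH, hnormbH, hnormaL, hnormbL]
    ring
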